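/- arXiv:1703.10031 — 9 statements merged into one kernel-verified Lean document; each statement's English description precedes it below -/
import Mathlib

section
/- Let c_n be defined by c_n = γ_{n,0}, where γ satisfies γ_{0,p} = p+1, γ_{1,p} = p^2+p+1, and γ_{n+1,p} = Σ_{i=0}^{n} γ_{i,p} γ_{n-i,p+i} for n ≥ 1. Then c_n satisfies n! ≤ c_n ≤ Catalan(n) * n! for all n ≥ 1, where Catalan(n) = (1/(n+1)) * binomial(2n, n). -/
/-!
Both bounds are proved for all `γ n p` with the rising factorial `(p + 1)⋯(p + n)` in place of
`n!`, so that the shift `p ↦ p + i` in the recurrence can be absorbed. The last term of the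
recurrence alone, `γ (n, p) · γ (0, p + n) = γ (n, p) · (p + n + 1)`, gives the lower bound. For
the upper bound `γ (n, p) ≤ Cat(n) · (p + 1) · (p + 1)⋯(p + n)`, each term `γ (i, p) γ (n - i, p + i)`
of the recurrence is at most `Cat(i) Cat(n - i)` times the bound for `n + 1`, and the Catalan
recurrence sums these coefficients to `Cat(n + 1)`.
-/

open Finset

lemma catalan_succ_eq_sum_range (n : ℕ) :
    catalan (n + 1) = ∑ i ∈ range (n + 1), catalan i * catalan (n - i) := by
  rw [catalan_succ, Fin.sum_univ_eq_sum_range (fun i => catalan i * catalan (n - i))]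

lemma ascFactorial_mul_add_mul_ascFactorial_le (a : ℕ) {i m : ℕ} (h : i ≤ m) :
    a.ascFactorial i * ((a + i) * (a + i).ascFactorial (m - i)) ≤ a.ascFactorial (m + 1) :=
  calc a.ascFactorial i * ((a + i) * (a + i).ascFactorial (m - i))
      = (a + i) * (a.ascFactorial i * (a + i).ascFactorial (m - i)) := by ring
    _ = (a + i) * a.ascFactorial m := by
      rw [Nat.ascFactorial_mul_ascFactorial, Nat.add_sub_cancel' h]
    _ ≤ (a + m) * a.ascFactorial m := Nat.mul_le_mul_right _ (by omega)
    _ = a.ascFactorial (m + 1) := Nat.ascFactorial_succ.symm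

lemma ascFactorial_le_of_recurrence {γ : ℕ → ℕ → ℕ}
    (h0 : ∀ p, γ 0 p = p + 1) (h1 : ∀ p, γ 1 p = p ^ 2 + p + 1)
    (hrec : ∀ n p, 1 ≤ n →
      γ (n + 1) p = ∑ i ∈ range (n + 1), γ i p * γ (n - i) (p + i)) (p : ℕ) :
    ∀ n, (p + 1).ascFactorial n ≤ γ n p
  | 0 => by simp [h0]
  | 1 => by rw [h1, Nat.ascFactorial_succ, Nat.ascFactorial_zero]; nlinarith
  | n + 2 => by
    have hlast : γ (n + 1) p * γ 0 (p + (n + 1)) ≤ γ (n + 2) p := by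
      rw [hrec (n + 1) p (by omega)]
      simpa using single_le_sum (f := fun i => γ i p * γ (n + 1 - i) (p + i))
        (fun _ _ => Nat.zero_le _) (self_mem_range_succ (n + 1))
    calc (p + 1).ascFactorial (n + 2) = (p + 1).ascFactorial (n + 1) * (p + (n + 1) + 1) := by
          rw [Nat.ascFactorial_succ]; ring
      _ ≤ γ (n + 1) p * γ 0 (p + (n + 1)) := by
          rw [h0]
          exact Nat.mul_le_mul_right _ (ascFactorial_le_of_recurrence h0 h1 hrec p (n + 1))
      _ ≤ γ (n + 2) p := hlast

lemma le_catalan_mul_ascFactorial_of_recurrence {γ : ℕ → ℕ → ℕ}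
    (h0 : ∀ p, γ 0 p = p + 1) (h1 : ∀ p, γ 1 p = p ^ 2 + p + 1)
    (hrec : ∀ n p, 1 ≤ n →
      γ (n + 1) p = ∑ i ∈ range (n + 1), γ i p * γ (n - i) (p + i)) (n p : ℕ) :
    γ n p ≤ catalan n * ((p + 1) * (p + 1).ascFactorial n) := by
  induction n using Nat.strong_induction_on generalizing p with
  | _ n ih =>
  rcases n with _ | _ | m
  · simp [h0]
  · rw [h1, catalan_one, Nat.ascFactorial_succ, Nat.ascFactorial_zero]; nlinarith
  · have hterm : ∀ i ∈ range (m + 2), γ i p * γ (m + 1 - i) (p + i) ≤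
        catalan i * catalan (m + 1 - i) * ((p + 1) * (p + 1).ascFactorial (m + 2)) := by
      intro i hi
      have hi : i ≤ m + 1 := Nat.lt_succ_iff.mp (mem_range.mp hi)
      calc γ i p * γ (m + 1 - i) (p + i)
          ≤ catalan i * ((p + 1) * (p + 1).ascFactorial i) *
            (catalan (m + 1 - i) * ((p + i + 1) * (p + i + 1).ascFactorial (m + 1 - i))) :=
            Nat.mul_le_mul (ih i (by omega) p) (ih (m + 1 - i) (by omega) (p + i))
        _ = catalan i * catalan (m + 1 - i) * ((p + 1) * ((p + 1).ascFactorial i *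
            ((p + 1 + i) * (p + 1 + i).ascFactorial (m + 1 - i)))) := by ring_nf
        _ ≤ catalan i * catalan (m + 1 - i) * ((p + 1) * (p + 1).ascFactorial (m + 2)) := by
            gcongr
            exact ascFactorial_mul_add_mul_ascFactorial_le (p + 1) hi
    calc γ (m + 2) p = ∑ i ∈ range (m + 2), γ i p * γ (m + 1 - i) (p + i) :=
          hrec (m + 1) p (by omega)
      _ ≤ ∑ i ∈ range (m + 2),
            catalan i * catalan (m + 1 - i) * ((p + 1) * (p + 1).ascFactorial (m + 2)) :=
          sum_le_sum hterm
      _ = catalan (m + 2) * ((p + 1) * (p + 1).ascFactorial (m + 2)) := by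
          rw [← sum_mul, catalan_succ_eq_sum_range]

theorem stmt_1 (γ : ℕ → ℕ → ℕ)
    (h0 : ∀ p, γ 0 p = p + 1)
    (h1 : ∀ p, γ 1 p = p ^ 2 + p + 1)
    (hrec : ∀ n p, 1 ≤ n →
      γ (n + 1) p = ∑ i ∈ Finset.range (n + 1), γ i p * γ (n - i) (p + i)) :
    ∀ n : ℕ, 1 ≤ n →
      n.factorial ≤ γ n 0 ∧ γ n 0 ≤ catalan n * n.factorial := by
  intro n _
  have hlower := ascFactorial_le_of_recurrence h0 h1 hrec 0 n
  have hupper := le_catalan_mul_ascFactorial_of_recurrence h0 h1 hrec n 0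
  rw [zero_add, Nat.one_ascFactorial] at hlower hupper
  exact ⟨hlower, by simpa using hupper⟩
end

section
/- Define r_{2,n} = ((n-1)!/√5) * ( ((3+√5)/2)^n − ((3−√5)/2)^n ) for n ≥ 1 and r_{2,0} = 1. Then the exponential generating function R_2(z) = Σ_{n≥0} r_{2,n} z^n/n! satisfies (z^2 − 3z + 1) R_2''(z) + (2z − 3) R_2'(z) = 0 with R_2(0) = 1 and R_2'(0) = 1. -/
/-!
With `α, β = (3 ± √5)/2` we have `αβ = 1`, `α - β = √5` and `z² - 3z + 1 = (1 - αz)(1 - βz)`.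
For `n ≥ 1`, `r n zⁿ / n! = (αⁿ - βⁿ) zⁿ / (n √5)`, so summing the logarithm series gives
`R z = 1 + (log (1 - βz) - log (1 - αz)) / √5` on `|z| < β`. Differentiating,
`R' = 1 / (z² - 3z + 1)`, and the differential equation is `((z² - 3z + 1) R')' = 0`.
-/

open Real Filter Topology

lemma hasSum_log_one_sub_sub_log_one_sub {a b z : ℝ} (ha : |a * z| < 1) (hb : |b * z| < 1) :
    HasSum (fun n : ℕ => (a ^ (n + 1) - b ^ (n + 1)) * z ^ (n + 1) / (n + 1))
      (log (1 - b * z) - log (1 - a * z)) := by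
  have h := (hasSum_pow_div_log_of_abs_lt_one ha).sub (hasSum_pow_div_log_of_abs_lt_one hb)
  rw [neg_sub_neg] at h
  have hterm (n : ℕ) : (a * z) ^ (n + 1) / (n + 1) - (b * z) ^ (n + 1) / (n + 1)
      = (a ^ (n + 1) - b ^ (n + 1)) * z ^ (n + 1) / (n + 1) := by
    ring
  simpa only [hterm] using h

lemma hasDerivAt_log_one_sub_sub_log_one_sub {a b z : ℝ} (ha : 1 - a * z ≠ 0)
    (hb : 1 - b * z ≠ 0) :
    HasDerivAt (fun w => log (1 - b * w) - log (1 - a * w))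
      ((a - b) / ((1 - a * z) * (1 - b * z))) z := by
  have hlin (c : ℝ) : HasDerivAt (fun w => 1 - c * w) (-c) z := by
    simpa using ((hasDerivAt_id z).const_mul c).const_sub 1
  refine (((hlin b).log hb).fun_sub ((hlin a).log ha)).congr_deriv ?_
  rw [div_sub_div _ _ hb ha]
  ring

lemma one_sub_ne_zero_of_abs_lt_one {x : ℝ} (h : |x| < 1) : 1 - x ≠ 0 :=
  (sub_pos.2 (lt_of_abs_lt h)).ne'

lemma abs_mul_lt_one_of_abs_lt {a b z : ℝ} (hb : 0 < b) (hba : b ≤ a) (hab : a * b = 1)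
    (hz : |z| < b) : |a * z| < 1 ∧ |b * z| < 1 := by
  have ha : 0 < a := hb.trans_le hba
  have haz : |a * z| < 1 := by
    rw [abs_mul, abs_of_pos ha, ← hab]
    exact mul_lt_mul_of_pos_left hz ha
  refine ⟨haz, lt_of_le_of_lt ?_ haz⟩
  rw [abs_mul, abs_mul, abs_of_pos hb, abs_of_pos ha]
  exact mul_le_mul_of_nonneg_right hba (abs_nonneg z)

lemma hasSum_exp_series_of_binet {r : ℕ → ℝ} {a b c z : ℝ} (h0 : r 0 = 1)
    (hn : ∀ n : ℕ, 1 ≤ n → r n = ((n - 1).factorial : ℝ) / c * (a ^ n - b ^ n))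
    (ha : |a * z| < 1) (hb : |b * z| < 1) :
    HasSum (fun n : ℕ => r n * z ^ n / n.factorial)
      (1 + (log (1 - b * z) - log (1 - a * z)) / c) := by
  have hterm (n : ℕ) : r (n + 1) * z ^ (n + 1) / (n + 1).factorial
      = (a ^ (n + 1) - b ^ (n + 1)) * z ^ (n + 1) / (n + 1) / c := by
    rw [hn (n + 1) (Nat.le_add_left 1 n), Nat.add_sub_cancel, Nat.factorial_succ]
    have : (n.factorial : ℝ) ≠ 0 := by positivity
    push_cast
    field_simp
  have htail := (hasSum_log_one_sub_sub_log_one_sub ha hb).div_const c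
  simp only [← hterm] at htail
  simpa [h0, add_comm] using
    (hasSum_nat_add_iff (f := fun n => r n * z ^ n / n.factorial) 1).mp htail

lemma tsum_exp_series_eq_of_binet {r : ℕ → ℝ} {a b c z : ℝ} (h0 : r 0 = 1)
    (hn : ∀ n : ℕ, 1 ≤ n → r n = ((n - 1).factorial : ℝ) / c * (a ^ n - b ^ n))
    (hb : 0 < b) (hba : b ≤ a) (hab : a * b = 1) (hz : |z| < b) :
    ∑' n : ℕ, r n * z ^ n / n.factorial = 1 + (log (1 - b * z) - log (1 - a * z)) / c :=
  have hdisc := abs_mul_lt_one_of_abs_lt hb hba hab hz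
  (hasSum_exp_series_of_binet h0 hn hdisc.1 hdisc.2).tsum_eq

lemma deriv_tsum_exp_series_of_binet {r : ℕ → ℝ} {a b c z : ℝ} (h0 : r 0 = 1)
    (hn : ∀ n : ℕ, 1 ≤ n → r n = ((n - 1).factorial : ℝ) / c * (a ^ n - b ^ n))
    (hb : 0 < b) (hba : b ≤ a) (hab : a * b = 1) (hz : |z| < b) :
    deriv (fun w => ∑' n : ℕ, r n * w ^ n / n.factorial) z
      = (a - b) / c / ((1 - a * z) * (1 - b * z)) := by
  have hdisc := abs_mul_lt_one_of_abs_lt hb hba hab hz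
  have heq : (fun w => ∑' n : ℕ, r n * w ^ n / n.factorial)
      =ᶠ[𝓝 z] fun w => 1 + (log (1 - b * w) - log (1 - a * w)) / c :=
    ((isOpen_lt continuous_abs continuous_const).eventually_mem hz).mono
      fun w hw => tsum_exp_series_eq_of_binet h0 hn hb hba hab hw
  rw [heq.deriv_eq, ((hasDerivAt_log_one_sub_sub_log_one_sub
    (one_sub_ne_zero_of_abs_lt_one hdisc.1) (one_sub_ne_zero_of_abs_lt_one hdisc.2)).div_const
      c |>.const_add 1).deriv]
  ring

/-- `(q · f')' = 0` when `f' = 1 / q` near `z`. -/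
lemma mul_deriv_deriv_add_eq_zero {f q : ℝ → ℝ} {q' z : ℝ} (hq : HasDerivAt q q' z)
    (hqz : q z ≠ 0) (hf : deriv f =ᶠ[𝓝 z] fun w => (q w)⁻¹) :
    q z * deriv (deriv f) z + q' * deriv f z = 0 := by
  rw [hf.deriv_eq, hf.eq_of_nhds, ← Pi.inv_def, (hq.inv hqz).deriv]
  field_simp
  ring

/-- The EGF of relaxed binary trees of right height at most 2 satisfies
`(z²-3z+1) R₂'' + (2z-3) R₂' = 0`, `R₂(0)=1`, `R₂'(0)=1`. -/
theorem stmt_4 (r : ℕ → ℝ)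
    (h0 : r 0 = 1)
    (hn : ∀ n : ℕ, 1 ≤ n →
      r n = ((n - 1).factorial : ℝ) / Real.sqrt 5 *
        (((3 + Real.sqrt 5) / 2) ^ n - ((3 - Real.sqrt 5) / 2) ^ n))
    (R : ℝ → ℝ)
    (hR : R = fun z : ℝ => ∑' n : ℕ, r n * z ^ n / n.factorial) :
    R 0 = 1 ∧ deriv R 0 = 1 ∧
    ∀ z : ℝ, |z| < (3 - Real.sqrt 5) / 2 →
      (z ^ 2 - 3 * z + 1) * deriv (deriv R) z + (2 * z - 3) * deriv R z = 0 := by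
  have hsqrt5 : √5 ^ 2 = 5 := sq_sqrt (by norm_num)
  have hsqrt5_lt : √5 < 3 := by nlinarith [sqrt_nonneg 5]
  set α := (3 + √5) / 2 with hα
  set β := (3 - √5) / 2 with hβ
  have hαβ : α * β = 1 := by linear_combination -hsqrt5 / 4
  have hβα : β ≤ α := by linarith [sqrt_nonneg 5]
  have hβ_pos : 0 < β := by linarith
  have hfactor (z : ℝ) : (1 - α * z) * (1 - β * z) = z ^ 2 - 3 * z + 1 := by
    linear_combination z ^ 2 * hαβ
  have hderiv {z : ℝ} (hz : |z| < β) : deriv R z = (z ^ 2 - 3 * z + 1)⁻¹ := by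
    rw [hR, deriv_tsum_exp_series_of_binet h0 hn hβ_pos hβα hαβ hz, hfactor,
      show α - β = √5 by linarith, div_self (sqrt_pos.2 (by norm_num)).ne', one_div]
  have h00 : |(0 : ℝ)| < β := by simpa using hβ_pos
  refine ⟨by simpa [hR] using tsum_exp_series_eq_of_binet h0 hn hβ_pos hβα hαβ h00,
    by simpa using hderiv h00, fun z hz => ?_⟩
  have hq : HasDerivAt (fun w => w ^ 2 - 3 * w + 1) (2 * z - 3) z := by
    simpa using ((hasDerivAt_pow 2 z).sub ((hasDerivAt_id z).const_mul 3)).add_const 1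
  have hdisc := abs_mul_lt_one_of_abs_lt hβ_pos hβα hαβ hz
  have hq_ne : z ^ 2 - 3 * z + 1 ≠ 0 := hfactor z ▸ mul_ne_zero
    (one_sub_ne_zero_of_abs_lt_one hdisc.1) (one_sub_ne_zero_of_abs_lt_one hdisc.2)
  exact mul_deriv_deriv_add_eq_zero hq hq_ne
    (((isOpen_lt continuous_abs continuous_const).eventually_mem hz).mono fun w hw => hderiv hw)
end

section
/- Define a sequence of differential operators by L_0 = multiplication by (1−z), L_1 = (1−2z)D − 1, and L_k = L_{k−1}·D − L_{k−2}·D²·z for k ≥ 2, where D = d/dz. Write L_k = Σ_{i=0}^{k} ℓ_{k,i}(z) D^i with polynomials ℓ_{k,i}. Then for all k ≥ 2, ℓ_{k,0}(z) = 0. -/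
open Polynomial

/-- The differential operator family `L₀ = (1-z)·1`, `L₁ = (1-2z)D - 1`,
`L_k = L_{k-1}·D - L_{k-2}·D²·z`, acting on polynomials. -/
noncomputable def Lop : ℕ → Polynomial ℝ → Polynomial ℝ
  | 0 => fun f => (1 - X) * f
  | 1 => fun f => (1 - 2 * X) * derivative f - f
  | (k + 2) => fun f =>
      Lop (k + 1) (derivative f) - Lop k (derivative (derivative (X * f)))

/-! Applying `L_k = ∑ ℓ_{k,i} D^i` to the constant `1` isolates `ℓ_{k,0}`, and for `k ≥ 2`
the recursion gives `L_k 1 = L_{k-1}(D 1) - L_{k-2}(D² z) = L_{k-1} 0 - L_{k-2} 0 = 0`. -/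

theorem Polynomial.sum_mul_iterate_derivative_one {R : Type*} [CommSemiring R]
    (c : ℕ → R[X]) (n : ℕ) :
    ∑ i ∈ Finset.range (n + 1), c i * derivative^[i] (1 : R[X]) = c 0 := by
  rw [Finset.sum_range_succ', Finset.sum_eq_zero fun i _ => by
    rw [iterate_derivative_one i.succ_pos, mul_zero]]
  simp

theorem Lop_apply_zero : ∀ k, Lop k 0 = 0
  | 0 => by simp [Lop]
  | 1 => by simp [Lop]
  | k + 2 => by simp [Lop, Lop_apply_zero k, Lop_apply_zero (k + 1)]

theorem Lop_add_two_apply_one (k : ℕ) : Lop (k + 2) 1 = 0 := by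
  simp [Lop, Lop_apply_zero]

/-- If `L_k = ∑_{i=0}^{k} ℓ_{k,i}(z) D^i`, then `ℓ_{k,0} = 0` for all `k ≥ 2`. -/
theorem stmt_6 (ℓ : ℕ → ℕ → Polynomial ℝ)
    (hdec : ∀ (k : ℕ) (f : Polynomial ℝ),
      Lop k f = ∑ i ∈ Finset.range (k + 1), ℓ k i * (derivative^[i] f)) :
    ∀ k : ℕ, 2 ≤ k → ℓ k 0 = 0 := by
  intro k hk
  obtain ⟨m, rfl⟩ := Nat.exists_eq_add_of_le' hk
  have h := hdec (m + 2) 1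
  rw [Lop_add_two_apply_one, sum_mul_iterate_derivative_one] at h
  exact h.symm
end

section
/- Let U_m denote the Chebyshev polynomial of the second kind and let ℓ_{k,k}(z) satisfy ℓ_{0,0} = 1−z, ℓ_{1,1} = 1−2z, ℓ_{k,k}(z) = ℓ_{k−1,k−1}(z) − z ℓ_{k−2,k−2}(z). Then for z > 0, ℓ_{k,k}(z) = z^{(k+2)/2} U_{k+2}(1/(2√z)). -/
open Polynomial

/-- `ℓ_{k,k}(z) = z^{(k+2)/2} U_{k+2}(1/(2√z))` for `z > 0`, where `U` is the
Chebyshev polynomial of the second kind. -/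
theorem stmt_9 (p : ℕ → Polynomial ℝ)
    (h0 : p 0 = 1 - X)
    (h1 : p 1 = 1 - 2 * X)
    (hrec : ∀ k : ℕ, p (k + 2) = p (k + 1) - X * p k) :
    ∀ k : ℕ, ∀ z : ℝ, 0 < z →
      (p k).eval z =
        z ^ (((k : ℝ) + 2) / 2) *
          (Polynomial.Chebyshev.U ℝ ((k : ℤ) + 2)).eval (1 / (2 * Real.sqrt z)) := by
  intro k z hz
  have hs : 0 < Real.sqrt z := Real.sqrt_pos.mpr hz
  set s := Real.sqrt z with hsdef
  have hs2 : s * s = z := Real.mul_self_sqrt hz.le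
  have hpow : ∀ k : ℕ, z ^ (((k : ℝ) + 2) / 2) = s ^ (k + 2) := by
    intro k
    rw [show ((k : ℝ) + 2) / 2 = (1 / 2 : ℝ) * ((k + 2 : ℕ) : ℝ) by push_cast; ring,
      Real.rpow_mul hz.le, Real.rpow_natCast, hsdef, Real.sqrt_eq_rpow]
  rw [hpow]
  induction k using Nat.twoStepInduction with
  | zero =>
    rw [h0, show ((0:ℕ):ℤ) + 2 = 2 by norm_num, Polynomial.Chebyshev.U_two]
    rw [← hs2]
    simp only [eval_sub, eval_one, eval_X, eval_mul, eval_pow, eval_ofNat]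
    field_simp
    ring
  | one =>
    rw [h1, show ((1:ℕ):ℤ) + 2 = (1:ℤ) + 2 by norm_num, Polynomial.Chebyshev.U_add_two,
      show (1:ℤ) + 1 = 2 by norm_num, Polynomial.Chebyshev.U_two,
      Polynomial.Chebyshev.U_one]
    rw [← hs2]
    simp only [eval_sub, eval_one, eval_X, eval_mul, eval_pow, eval_ofNat]
    field_simp
    ring
  | more k ihk ihk1 =>
    rw [hrec, show ((k + 2 : ℕ) : ℤ) + 2 = ((k:ℤ) + 2) + 2 by push_cast; ring,
      Polynomial.Chebyshev.U_add_two,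
      show ((k:ℤ) + 2) + 1 = ((k + 1 : ℕ) : ℤ) + 2 by push_cast; ring]
    simp only [eval_sub, eval_mul, eval_X]
    rw [ihk, ihk1]
    have hU2 : ((k:ℤ)) + 2 = ((k : ℕ) : ℤ) + 2 := by push_cast; ring
    rw [hU2]
    set A := (Polynomial.Chebyshev.U ℝ (((k+1:ℕ):ℤ) + 2)).eval (1 / (2 * s))
    set B := (Polynomial.Chebyshev.U ℝ (((k:ℕ):ℤ) + 2)).eval (1 / (2 * s))
    rw [← hs2]
    simp only [eval_sub, eval_mul, eval_X, eval_ofNat]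
    field_simp
    ring
end

section
/- The smallest positive real root of the polynomial p_k(z) = Σ_{n=0}^{⌊(k+2)/2⌋} (−1)^n binomial(k+2−n, n) z^n is ρ_k = 1/(4 cos²(π/(k+3))). Moreover all roots of p_k are real, positive, and simple. -/
/-!
With `z = 1 / (4 cos² θ)`, the polynomials `p_m = ∑ₙ (-1)ⁿ C(m-n, n) zⁿ` satisfy Pascal's
recurrence `p_{m+2} = p_{m+1} - z p_m`, which after scaling by `(2 cos θ)^m` becomes the recurrence
of `sin ((m+1) θ) / sin θ`. Hence `p_m` vanishes at `1 / (4 cos² (jπ/(m+1)))` for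
`1 ≤ j ≤ m / 2`. These values are distinct and positive, increasing in `j`, and there are exactly
`deg p_m = m / 2` of them, so they are all the roots.
-/

open Polynomial Real

/-- `fibPoly R (k + 2)` is the paper's `p_k(z) = z^{(k+2)/2} U_{k+2}(1 / (2√z))`. -/
noncomputable def fibPoly (R : Type*) [CommRing R] (m : ℕ) : R[X] :=
  ∑ n ∈ Finset.range (m / 2 + 1), C ((-1 : R) ^ n * ((m - n).choose n : R)) * X ^ n

section Algebraic

variable {R : Type*} [CommRing R]

theorem coeff_fibPoly (m n : ℕ) :
    (fibPoly R m).coeff n = (-1) ^ n * ((m - n).choose n : R) := by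
  simp only [fibPoly, finsetSum_coeff, coeff_C_mul_X_pow, Finset.sum_ite_eq, Finset.mem_range]
  split_ifs with hn
  · rfl
  · rw [Nat.choose_eq_zero_of_lt (by omega), Nat.cast_zero, mul_zero]

theorem fibPoly_add_two (m : ℕ) : fibPoly R (m + 2) = fibPoly R (m + 1) - X * fibPoly R m := by
  ext (_ | n)
  · simp [coeff_fibPoly]
  · rw [coeff_sub, coeff_X_mul, coeff_fibPoly, coeff_fibPoly, coeff_fibPoly]
    obtain hn | hn := le_or_gt n m
    · have pascal := Nat.choose_succ_succ (m - n) n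
      rw [show m + 2 - (n + 1) = m - n + 1 by omega, show m + 1 - (n + 1) = m - n by omega, pascal]
      push_cast
      ring
    · rw [Nat.choose_eq_zero_of_lt (show m + 2 - (n + 1) < n + 1 by omega),
        Nat.choose_eq_zero_of_lt (show m + 1 - (n + 1) < n + 1 by omega),
        Nat.choose_eq_zero_of_lt (show m - n < n by omega)]
      simp

theorem fibPoly_ne_zero [Nontrivial R] (m : ℕ) : fibPoly R m ≠ 0 := by
  intro h
  simpa [h] using coeff_fibPoly (R := R) m 0

theorem natDegree_fibPoly [CharZero R] (m : ℕ) : (fibPoly R m).natDegree = m / 2 := by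
  refine le_antisymm (natDegree_sum_le_of_forall_le _ _ fun n hn => ?_)
    (le_natDegree_of_ne_zero ?_)
  · exact (natDegree_C_mul_X_pow_le _ _).trans (Nat.lt_succ_iff.mp (Finset.mem_range.mp hn))
  · rw [coeff_fibPoly, (isUnit_neg_one.pow _).mul_right_eq_zero.ne, Nat.cast_ne_zero]
    exact (Nat.choose_pos (by omega)).ne'

end Algebraic

theorem fibPoly_eval_mul_sin {θ : ℝ} (hθ : cos θ ≠ 0) (m : ℕ) :
    (fibPoly ℝ m).eval (1 / (4 * cos θ ^ 2)) * (2 * cos θ) ^ m * sin θ = sin ((m + 1) * θ) := by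
  induction m using Nat.twoStepInduction with
  | zero => simp [fibPoly]
  | one => simp [fibPoly, show (1 + 1) * θ = 2 * θ by ring, sin_two_mul]; ring
  | more m ih₀ ih₁ =>
    have sin_add_two :
        sin ((m + 2 + 1) * θ) = 2 * cos θ * sin ((m + 1 + 1) * θ) - sin ((m + 1) * θ) := by
      rw [show (m + 2 + 1) * θ = (m + 1 + 1) * θ + θ by ring,
        show (m + 1) * θ = (m + 1 + 1) * θ - θ by ring, sin_add, sin_sub]
      ring
    push_cast at ih₁ ⊢
    rw [sin_add_two, ← ih₀, ← ih₁, fibPoly_add_two, eval_sub, eval_mul, eval_X]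
    field_simp
    ring

noncomputable def fibRoot (m j : ℕ) : ℝ := 1 / (4 * cos (j * π / (m + 1)) ^ 2)

theorem fibRoot_angle_mem_Ioo {m j : ℕ} (hj : j ∈ Set.Icc 1 (m / 2)) :
    (j : ℝ) * π / (m + 1) ∈ Set.Ioo 0 (π / 2) := by
  obtain ⟨hj₁, hj₂⟩ := hj
  have hj₁' : (1 : ℝ) ≤ j := by exact_mod_cast hj₁
  have hj₂' : (2 * j : ℝ) < m + 1 := by exact_mod_cast (show 2 * j < m + 1 by omega)
  constructor
  · positivity
  · rw [div_lt_div_iff₀ (by positivity) two_pos]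
    nlinarith [pi_pos]

theorem strictMonoOn_one_div_four_mul_cos_sq :
    StrictMonoOn (fun x => 1 / (4 * cos x ^ 2)) (Set.Ico 0 (π / 2)) := by
  intro x hx y hy hxy
  have hcos_y : 0 < cos y := cos_pos_of_mem_Ioo ⟨by linarith [hy.1, pi_pos], hy.2⟩
  have hcos_lt : cos y < cos x :=
    strictAntiOn_cos ⟨hx.1, by linarith [hx.2, pi_pos]⟩ ⟨hy.1, by linarith [hy.2, pi_pos]⟩ hxy
  dsimp only
  gcongr

theorem strictMonoOn_fibRoot (m : ℕ) : StrictMonoOn (fibRoot m) (Set.Icc 1 (m / 2)) := by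
  refine strictMonoOn_one_div_four_mul_cos_sq.comp (fun i _ j _ hij => ?_)
    (fun j hj => Set.Ioo_subset_Ico_self (fibRoot_angle_mem_Ioo hj))
  gcongr

theorem fibRoot_pos {m j : ℕ} (hj : j ∈ Set.Icc 1 (m / 2)) : 0 < fibRoot m j := by
  have := cos_pos_of_mem_Ioo
    (Set.Ioo_subset_Ioo_left (by linarith [pi_pos]) (fibRoot_angle_mem_Ioo hj))
  unfold fibRoot
  positivity

theorem fibPoly_eval_fibRoot {m j : ℕ} (hj : j ∈ Set.Icc 1 (m / 2)) :
    (fibPoly ℝ m).eval (fibRoot m j) = 0 := by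
  obtain ⟨hθ₀, hθ₁⟩ := fibRoot_angle_mem_Ioo hj
  have hcos : cos (j * π / (m + 1)) ≠ 0 := (cos_pos_of_mem_Ioo ⟨by linarith, hθ₁⟩).ne'
  have hsin : sin (j * π / (m + 1)) ≠ 0 := (sin_pos_of_pos_of_lt_pi hθ₀ (by linarith)).ne'
  have key := fibPoly_eval_mul_sin hcos m
  rw [mul_div_cancel₀ _ (by positivity : (m + 1 : ℝ) ≠ 0), sin_nat_mul_pi] at key
  simpa [fibRoot, hcos, hsin] using key

theorem card_image_fibRoot (m : ℕ) : ((Finset.Icc 1 (m / 2)).image (fibRoot m)).card = m / 2 := by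
  rw [Finset.card_image_of_injOn (by simpa using (strictMonoOn_fibRoot m).injOn), Nat.card_Icc,
    Nat.add_sub_cancel]

theorem roots_fibPoly (m : ℕ) :
    (fibPoly ℝ m).roots = ((Finset.Icc 1 (m / 2)).image (fibRoot m)).val := by
  refine roots_eq_of_natDegree_le_card_of_ne_zero ?_ ?_ (fibPoly_ne_zero m)
  · simp only [Finset.mem_image, Finset.mem_Icc]
    rintro _ ⟨j, hj, rfl⟩
    exact fibPoly_eval_fibRoot hj
  · rw [card_image_fibRoot, natDegree_fibPoly]

/-- The smallest positive root of `p_k(z) = ∑_{n=0}^{⌊(k+2)/2⌋} (-1)ⁿ C(k+2-n,n) zⁿ`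
is `ρ_k = 1/(4cos²(π/(k+3)))`, and all roots of `p_k` are real, positive and simple. -/
theorem stmt_11 :
    ∀ k : ℕ,
      ∀ P : Polynomial ℝ,
        P = ∑ n ∈ Finset.range ((k + 2) / 2 + 1),
          C ((-1 : ℝ) ^ n * (Nat.choose (k + 2 - n) n : ℝ)) * X ^ n →
        ∀ ρ : ℝ, ρ = 1 / (4 * Real.cos (π / (k + 3)) ^ 2) →
          (P.roots.card = P.natDegree) ∧
          P.roots.Nodup ∧
          (∀ x ∈ P.roots, 0 < x) ∧
          ρ ∈ P.roots ∧
          (∀ x ∈ P.roots, ρ ≤ x) := by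
  intro k P hP ρ hρ
  have hρ_root : ρ = fibRoot (k + 2) 1 := by
    rw [hρ, fibRoot]
    push_cast
    ring_nf
  have one_mem : 1 ∈ Set.Icc 1 ((k + 2) / 2) := ⟨le_rfl, by omega⟩
  change P = fibPoly ℝ (k + 2) at hP
  subst hP hρ_root
  rw [roots_fibPoly, natDegree_fibPoly]
  refine ⟨card_image_fibRoot _, Finset.nodup _, ?_,
    Finset.mem_image_of_mem _ (Finset.mem_Icc.mpr one_mem), ?_⟩
    <;> simp only [Finset.mem_val, Finset.forall_mem_image, Finset.mem_Icc]
  · exact fun j hj => fibRoot_pos hj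
  · exact fun j hj => (strictMonoOn_fibRoot _).monotoneOn one_mem hj hj.1
end

section
/- With ℓ_{k,i} as defined by the recurrences ℓ_{k,0} = 0 for k ≥ 2, ℓ_{k,1} = ℓ_{k−1,0} − 2ℓ_{k−2,0}, ℓ_{k,i} = ℓ_{k−1,i−1} − (i+1)ℓ_{k−2,i−1} − z ℓ_{k−2,i−2} (2 ≤ i ≤ k−1), and initial values ℓ_{0,0} = 1−z, ℓ_{1,0} = −1, ℓ_{1,1} = 1−2z: for all k ≥ 2 and all 0 ≤ i ≤ ⌊(k−2)/2⌋, the polynomial ℓ_{k,i}(z) is identically zero. -/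
open Polynomial

/-- For `k ≥ 2` and `0 ≤ i ≤ ⌊(k-2)/2⌋`, the coefficient polynomial
`ℓ_{k,i}` is identically zero. -/
theorem stmt_13 (ℓ : ℕ → ℕ → Polynomial ℝ)
    (h00 : ℓ 0 0 = 1 - X)
    (h10 : ℓ 1 0 = -1)
    (h11 : ℓ 1 1 = 1 - 2 * X)
    (hk0 : ∀ k : ℕ, 2 ≤ k → ℓ k 0 = 0)
    (hk1 : ∀ k : ℕ, 2 ≤ k → ℓ k 1 = ℓ (k - 1) 0 - 2 * ℓ (k - 2) 0)
    (hki : ∀ k : ℕ, 2 ≤ k → ∀ i : ℕ, 2 ≤ i → i ≤ k - 1 →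
      ℓ k i = ℓ (k - 1) (i - 1) - C ((i : ℝ) + 1) * ℓ (k - 2) (i - 1)
        - X * ℓ (k - 2) (i - 2)) :
    ∀ k : ℕ, 2 ≤ k → ∀ i : ℕ, i ≤ (k - 2) / 2 → ℓ k i = 0 := by
  intro k
  induction k using Nat.strong_induction_on with
  | _ k ih =>
    intro hk i hi
    match i, hi with
    | 0, _ => exact hk0 k hk
    | 1, hi =>
      rw [hk1 k hk, hk0 (k - 1) (by omega), hk0 (k - 2) (by omega)]
      ring
    | (i + 2), hi =>
      have h2i : 2 * (i + 2) ≤ k - 2 := by omega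
      rw [hki k hk (i + 2) (by omega) (by omega)]
      simp only [show i + 2 - 1 = i + 1 from rfl, show i + 2 - 2 = i from rfl]
      rw [ih (k - 1) (by omega) (by omega) (i + 1) (by omega),
          ih (k - 2) (by omega) (by omega) (i + 1) (by omega),
          ih (k - 2) (by omega) (by omega) i (by omega)]
      ring
end

section
/- The exponential generating function C_1(z) of compacted binary trees of right height at most 1 satisfies (1−2z) C_1''(z) − (3−z) C_1'(z) = 0 with C_1(0) = 1, C_1'(0) = 1; consequently C_1'(z) = e^{z/2} / (1−2z)^{5/4}. -/
/-!
`C₁'` solves the first-order linear equation `u' = (3 - z)/(1 - 2z) · u` on `(-1/2, 1/2)`, and so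
does the nonvanishing function `e^{z/2} / (1 - 2z)^{5/4}`. The quotient of two such solutions has
zero derivative, hence is constant on the interval, and both equal `1` at `z = 0`.
-/

open Real Set

theorem IsOpen.mul_eq_mul_of_hasDerivAt_eq_mul {𝕜 : Type*} [RCLike 𝕜] {s : Set 𝕜}
    (hs : IsOpen s) (hs' : IsPreconnected s) {a g y : 𝕜 → 𝕜}
    (hg : ∀ z ∈ s, HasDerivAt g (a z * g z) z) (hy : ∀ z ∈ s, HasDerivAt y (a z * y z) z)
    (hy₀ : ∀ z ∈ s, y z ≠ 0) {x z : 𝕜} (hx : x ∈ s) (hz : z ∈ s) :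
    g z * y x = g x * y z := by
  have hquot : ∀ w ∈ s, HasDerivAt (g / y) 0 w := fun w hw =>
    ((hg w hw).div (hy w hw) (hy₀ w hw)).congr_deriv (by ring)
  have hconst : (g / y) z = (g / y) x :=
    hs.is_const_of_deriv_eq_zero hs'
      (fun w hw => (hquot w hw).differentiableAt.differentiableWithinAt)
      (fun w hw => (hquot w hw).deriv) hz hx
  exact (div_eq_div_iff (hy₀ z hz) (hy₀ x hx)).mp hconst

theorem hasDerivAt_exp_div_rpow {z : ℝ} (hz : z < 1 / 2) :
    HasDerivAt (fun z => exp (z / 2) / (1 - 2 * z) ^ ((5 : ℝ) / 4))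
      ((3 - z) / (1 - 2 * z) * (exp (z / 2) / (1 - 2 * z) ^ ((5 : ℝ) / 4))) z := by
  have hpos : 0 < 1 - 2 * z := by linarith
  have hexp : HasDerivAt (fun z => exp (z / 2)) (exp (z / 2) * (1 / 2)) z :=
    ((hasDerivAt_id z).div_const 2).exp
  have hlin : HasDerivAt (fun z : ℝ => 1 - 2 * z) (-2) z := by
    simpa using ((hasDerivAt_id z).const_mul 2).const_sub 1
  refine (hexp.div (hlin.rpow_const (p := 5 / 4) (Or.inl hpos.ne'))
    (rpow_pos_of_pos hpos _).ne').congr_deriv ?_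
  rw [rpow_sub hpos, rpow_one]
  -- `field_simp` normalizes `1 - 2 * z` to this form before looking for its nonvanishing
  have hq : 1 - z * 2 ≠ 0 := by linarith
  field_simp
  ring

theorem stmt_14_general (f : ℝ → ℝ)
    (hf' : ∀ z ∈ Ioo (-(1 : ℝ) / 2) (1 / 2), DifferentiableAt ℝ (deriv f) z)
    (hode : ∀ z ∈ Ioo (-(1 : ℝ) / 2) (1 / 2),
      (1 - 2 * z) * deriv (deriv f) z - (3 - z) * deriv f z = 0)
    (h0' : deriv f 0 = 1) :
    ∀ z ∈ Ioo (-(1 : ℝ) / 2) (1 / 2),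
      deriv f z = Real.exp (z / 2) / (1 - 2 * z) ^ ((5 : ℝ) / 4) := by
  have hsol : ∀ z ∈ Ioo (-(1 : ℝ) / 2) (1 / 2),
      HasDerivAt (deriv f) ((3 - z) / (1 - 2 * z) * deriv f z) z := fun z hz => by
    refine (hf' z hz).hasDerivAt.congr_deriv ?_
    rw [div_mul_eq_mul_div, eq_div_iff (by linarith [hz.2])]
    linarith [hode z hz]
  intro z hz
  have hprop := isOpen_Ioo.mul_eq_mul_of_hasDerivAt_eq_mul isPreconnected_Ioo hsol
    (fun w hw => hasDerivAt_exp_div_rpow hw.2)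
    (fun w hw => (div_pos (exp_pos _) (rpow_pos_of_pos (by linarith [hw.2]) _)).ne')
    (x := 0) (by norm_num) hz
  simpa [h0'] using hprop

/-- The EGF `C₁` of compacted binary trees of right height at most 1 satisfies
`(1-2z)C₁'' - (3-z)C₁' = 0`, `C₁(0)=1`, `C₁'(0)=1`; consequently
`C₁'(z) = e^{z/2}/(1-2z)^{5/4}`. -/
theorem stmt_14 (f : ℝ → ℝ)
    (hf : ∀ z ∈ Ioo (-(1 : ℝ) / 2) (1 / 2), DifferentiableAt ℝ f z)
    (hf' : ∀ z ∈ Ioo (-(1 : ℝ) / 2) (1 / 2), DifferentiableAt ℝ (deriv f) z)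
    (hode : ∀ z ∈ Ioo (-(1 : ℝ) / 2) (1 / 2),
      (1 - 2 * z) * deriv (deriv f) z - (3 - z) * deriv f z = 0)
    (h0 : f 0 = 1) (h0' : deriv f 0 = 1) :
    ∀ z ∈ Ioo (-(1 : ℝ) / 2) (1 / 2),
      deriv f z = Real.exp (z / 2) / (1 - 2 * z) ^ ((5 : ℝ) / 4) :=
  stmt_14_general f hf' hode h0'
end

section
/- If f: (−1/2, 1/2) → ℝ is differentiable, satisfies (1−2z) f'(z) − (3−z) f(z) = 0 and f(0) = 1, then f(z) = e^{z/2} (1−2z)^{−5/4} for all z in (−1/2, 1/2). -/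
open Real Set

/-!
On `(-1/2, 1/2)` the equation reads `y' = (3 - z)/(1 - 2z) · y`, and `e^{z/2}(1 - 2z)^{-5/4}` is a
nowhere-vanishing solution of it (its logarithmic derivative is `1/2 + (5/2)/(1 - 2z)`). The
quotient of `f` by it therefore has derivative zero on the interval, hence is constant, equal to
its value `1` at `0`.
-/

theorem IsOpen.eqOn_of_hasDerivAt_mul_self {𝕜 : Type*} [RCLike 𝕜] {s : Set 𝕜} {p f g : 𝕜 → 𝕜}
    (hs : IsOpen s) (hs' : IsPreconnected s) (hf : ∀ x ∈ s, HasDerivAt f (p x * f x) x)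
    (hg : ∀ x ∈ s, HasDerivAt g (p x * g x) x) (hg0 : ∀ x ∈ s, g x ≠ 0) {x₀ : 𝕜} (hx₀ : x₀ ∈ s)
    (hfg : f x₀ = g x₀) : EqOn f g s := by
  have hquot : ∀ x ∈ s, HasDerivAt (fun y => f y / g y) 0 x := fun x hx => by
    refine ((hf x hx).div (hg x hx) (hg0 x hx)).congr_deriv ?_
    ring
  have hconst : ∀ x ∈ s, f x / g x = f x₀ / g x₀ := fun x hx =>
    hs.is_const_of_deriv_eq_zero hs'
      (fun y hy => (hquot y hy).differentiableAt.differentiableWithinAt)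
      (fun y hy => (hquot y hy).deriv) hx hx₀
  intro x hx
  have := hconst x hx
  rwa [hfg, div_self (hg0 x₀ hx₀), div_eq_one_iff_eq (hg0 x hx)] at this

theorem hasDerivAt_exp_half_mul_rpow {z : ℝ} (hz : z < 1 / 2) :
    HasDerivAt (fun z => exp (z / 2) * (1 - 2 * z) ^ (-(5 : ℝ) / 4))
      ((3 - z) / (1 - 2 * z) * (exp (z / 2) * (1 - 2 * z) ^ (-(5 : ℝ) / 4))) z := by
  have hpos : 0 < 1 - 2 * z := by linarith
  have hexp : HasDerivAt (fun z => exp (z / 2)) (exp (z / 2) * (1 / 2)) z :=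
    ((hasDerivAt_id z).div_const 2).exp
  have hrpow : HasDerivAt (fun z => (1 - 2 * z) ^ (-(5 : ℝ) / 4))
      (-2 * (-(5 : ℝ) / 4) * (1 - 2 * z) ^ (-(5 : ℝ) / 4 - 1)) z := by
    have hlin : HasDerivAt (fun z : ℝ => 1 - 2 * z) (-2) z := by
      simpa using ((hasDerivAt_id z).const_mul 2).const_sub 1
    exact hlin.rpow_const (Or.inl hpos.ne')
  refine (hexp.mul hrpow).congr_deriv ?_
  rw [rpow_sub hpos, rpow_one]
  set u := 1 - 2 * z with hu
  field_simp
  linarith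

/-- The separation-of-variables solution of `(1-2z)f' - (3-z)f = 0`, `f(0)=1`:
`f(z) = e^{z/2}(1-2z)^{-5/4}` on `(-1/2, 1/2)`. -/
theorem stmt_15 (f : ℝ → ℝ)
    (hf : ∀ z ∈ Ioo (-(1 : ℝ) / 2) (1 / 2), DifferentiableAt ℝ f z)
    (hode : ∀ z ∈ Ioo (-(1 : ℝ) / 2) (1 / 2),
      (1 - 2 * z) * deriv f z - (3 - z) * f z = 0)
    (h0 : f 0 = 1) :
    ∀ z ∈ Ioo (-(1 : ℝ) / 2) (1 / 2),
      f z = Real.exp (z / 2) * (1 - 2 * z) ^ (-(5 : ℝ) / 4) := by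
  have hf' : ∀ z ∈ Ioo (-(1 : ℝ) / 2) (1 / 2),
      HasDerivAt f ((3 - z) / (1 - 2 * z) * f z) z := fun z hz => by
    have hpos : 0 < 1 - 2 * z := by linarith [hz.2]
    refine (hf z hz).hasDerivAt.congr_deriv ?_
    rw [div_mul_eq_mul_div, eq_div_iff hpos.ne']
    linarith [hode z hz]
  refine isOpen_Ioo.eqOn_of_hasDerivAt_mul_self isPreconnected_Ioo hf'
    (fun z hz => hasDerivAt_exp_half_mul_rpow hz.2) (fun z hz => ?_) (x₀ := 0) (by norm_num) ?_
  · exact (mul_pos (exp_pos _) (rpow_pos_of_pos (by linarith [hz.2]) _)).ne'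
  · simp [h0]
end

section
/- Define polynomials m_{k,i} by: m_{0,−1} = −1, m_{0,0} = 1−z, m_{1,−1} = 0, m_{1,0} = z−3, m_{1,1} = 1−2z, and for k ≥ 2 the recurrences m_{k,−1} = 0, m_{k,i} = m_{k−1,i−1} + (i+1)m_{k−2,i} + (z−i−2)m_{k−2,i−1} − z m_{k−2,i−2} for 1 ≤ i ≤ k−1, m_{k,k} = m_{k−1,k−1} − z m_{k−2,k−2}, and m_{k,0} equals −2z+3 for k even, z−3 for k odd. Then for all k, the leading coefficient m_{k,k}(z) equals ℓ_{k,k}(z) = Σ_{n=0}^{⌊(k+2)/2⌋} (−1)^n binomial(k+2−n,n) z^n. -/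
/-! Both `k ↦ m_{k,k}` and `k ↦ ℓ_{k,k}` satisfy `f (k + 2) = f (k + 1) - z f k` with
`f 0 = 1 - z` and `f 1 = 1 - 2z`; for `ℓ` the recurrence is Pascal's rule on the coefficients. -/

open Polynomial

noncomputable def relaxedLeadingCoeff (k : ℕ) : ℝ[X] :=
  ∑ n ∈ Finset.range ((k + 2) / 2 + 1),
    C ((-1 : ℝ) ^ n * (Nat.choose (k + 2 - n) n : ℝ)) * X ^ n

-- Beyond `(k + 2) / 2` the binomial coefficient vanishes, so the truncation of the sum is invisible.
theorem coeff_relaxedLeadingCoeff (k n : ℕ) :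
    (relaxedLeadingCoeff k).coeff n = (-1 : ℝ) ^ n * (Nat.choose (k + 2 - n) n : ℝ) := by
  simp only [relaxedLeadingCoeff, finsetSum_coeff, coeff_C_mul, coeff_X_pow]
  rw [Finset.sum_eq_single n (fun b _ hb => by simp [Ne.symm hb])]
  · simp
  · intro hn
    rw [Finset.mem_range, not_lt] at hn
    simp [Nat.choose_eq_zero_of_lt (show k + 2 - n < n by omega)]

theorem relaxedLeadingCoeff_zero : relaxedLeadingCoeff 0 = 1 - X := by
  simp [relaxedLeadingCoeff, Finset.sum_range_succ, sub_eq_add_neg]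

theorem relaxedLeadingCoeff_one : relaxedLeadingCoeff 1 = 1 - 2 * X := by
  norm_num [relaxedLeadingCoeff, Finset.sum_range_succ]
  ring

theorem Nat.choose_sub_succ_succ (k t : ℕ) :
    (k + 3 - t).choose (t + 1) = (k + 2 - t).choose (t + 1) + (k + 2 - t).choose t := by
  rcases le_or_gt t (k + 2) with h | h
  · rw [show k + 3 - t = k + 2 - t + 1 by omega, Nat.choose_succ_succ', Nat.add_comm]
  · simp only [Nat.choose_eq_zero_of_lt (show k + 3 - t < t + 1 by omega),
      Nat.choose_eq_zero_of_lt (show k + 2 - t < t + 1 by omega),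
      Nat.choose_eq_zero_of_lt (show k + 2 - t < t by omega)]

theorem relaxedLeadingCoeff_add_two (k : ℕ) :
    relaxedLeadingCoeff (k + 2) = relaxedLeadingCoeff (k + 1) - X * relaxedLeadingCoeff k := by
  ext (_ | t)
  · simp [coeff_relaxedLeadingCoeff]
  · rw [coeff_sub, coeff_X_mul, coeff_relaxedLeadingCoeff, coeff_relaxedLeadingCoeff,
      coeff_relaxedLeadingCoeff, show k + 2 + 2 - (t + 1) = k + 3 - t by omega,
      show k + 1 + 2 - (t + 1) = k + 2 - t by omega, Nat.choose_sub_succ_succ]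
    push_cast
    ring

theorem stmt_16_general (m : ℕ → ℤ → Polynomial ℝ)
    (h00 : m 0 0 = 1 - X)
    (h11 : m 1 1 = 1 - 2 * X)
    (hkk : ∀ k : ℕ, 2 ≤ k →
      m k (k : ℤ) = m (k - 1) ((k : ℤ) - 1) - X * m (k - 2) ((k : ℤ) - 2)) :
    ∀ k : ℕ, m k (k : ℤ) = ∑ n ∈ Finset.range ((k + 2) / 2 + 1),
      C ((-1 : ℝ) ^ n * (Nat.choose (k + 2 - n) n : ℝ)) * X ^ n := by
  intro k
  change m k k = relaxedLeadingCoeff k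
  induction k using Nat.twoStepInduction with
  | zero =>
    rw [Nat.cast_zero, h00, relaxedLeadingCoeff_zero]
  | one =>
    rw [Nat.cast_one, h11, relaxedLeadingCoeff_one]
  | more k ih₀ ih₁ =>
    rw [hkk (k + 2) (by omega), relaxedLeadingCoeff_add_two, ← ih₀, ← ih₁]
    congr 2 <;> push_cast <;> ring_nf

/-- The leading coefficient `m_{k,k}` of the operator family `M_k` for compacted
trees coincides with the leading coefficient `ℓ_{k,k}` of the relaxed-tree
operators, namely `∑_{n=0}^{⌊(k+2)/2⌋} (-1)ⁿ C(k+2-n,n) zⁿ`. -/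
theorem stmt_16 (m : ℕ → ℤ → Polynomial ℝ)
    (h0m : m 0 (-1) = -1)
    (h00 : m 0 0 = 1 - X)
    (h1m : m 1 (-1) = 0)
    (h10 : m 1 0 = X - 3)
    (h11 : m 1 1 = 1 - 2 * X)
    (hkm : ∀ k : ℕ, 2 ≤ k → m k (-1) = 0)
    (hk0 : ∀ k : ℕ, 2 ≤ k →
      m k 0 = if Even k then 3 - 2 * X else X - 3)
    (hki : ∀ k : ℕ, 2 ≤ k → ∀ i : ℤ, 1 ≤ i → i ≤ (k : ℤ) - 1 →
      m k i = m (k - 1) (i - 1) + C ((i : ℝ) + 1) * m (k - 2) i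
        + (X - C ((i : ℝ) + 2)) * m (k - 2) (i - 1) - X * m (k - 2) (i - 2))
    (hkk : ∀ k : ℕ, 2 ≤ k →
      m k (k : ℤ) = m (k - 1) ((k : ℤ) - 1) - X * m (k - 2) ((k : ℤ) - 2)) :
    ∀ k : ℕ, m k (k : ℤ) = ∑ n ∈ Finset.range ((k + 2) / 2 + 1),
      C ((-1 : ℝ) ^ n * (Nat.choose (k + 2 - n) n : ℝ)) * X ^ n :=
  stmt_16_general m h00 h11 hkk
end
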